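/- Let U(m,j) = C(m-j,j)·2^j and fix integers x, y ≥ 0 with x ≥ y + 2, m = x + 2y. Then for every r with 0 ≤ r ≤ ⌊y/2⌋, U(m, x-1-r) ≥ U(m, x+r). Consequently Σ_{j=0}^{x-1} U(m,j) ≥ Σ_{j≥x+1} U(m,j). -/

import Mathlib

def U (m j : ℕ) : ℕ := Nat.choose (m - j) j * 2 ^ j

/-!
With `m = x + 2y`, consecutive terms satisfy
`U(m, j+1) (m-j)(j+1) = 2 (m-2j)(m-2j-1) U(m, j)`. This shows `U(m, x) ≤ U(m, x-1)`, and that the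
ratio `U(m, x-1-r) / U(m, x+r)` does not decrease in `r`: the quartic inequality this amounts to
splits into two comparisons of differences of squares. Summing `U(m, x+r) ≤ U(m, x-1-r)` over
`r ≤ y` gives the inequality of sums, since `U(m, j) = 0` for `2j > m`.
-/

open Finset

lemma U_eq_zero_of_lt {m j : ℕ} (h : m < 2 * j) : U m j = 0 := by
  simp [U, Nat.choose_eq_zero_of_lt (by omega : m - j < j)]

-- `n` plays the role of `m - 2j`, so that no truncated subtraction enters the ratio.
lemma U_succ_mul (n j : ℕ) :
    U (n + 2 * j) (j + 1) * ((n + j) * (j + 1)) = 2 * n * (n - 1) * U (n + 2 * j) j := by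
  rcases n with _ | n
  · simp [U_eq_zero_of_lt]
  have hl : n + 1 + 2 * j - (j + 1) = n + j := by omega
  have hr : n + 1 + 2 * j - j = n + j + 1 := by omega
  have h₁ := Nat.choose_succ_right_eq (n + j) j
  have h₂ := Nat.choose_mul_succ_eq (n + j) j
  rw [Nat.add_sub_cancel] at h₁
  rw [show n + j + 1 - j = n + 1 by omega] at h₂
  simp only [U, hl, hr, Nat.add_sub_cancel, pow_succ]
  calc (n + j).choose (j + 1) * (2 ^ j * 2) * ((n + 1 + j) * (j + 1))
      = 2 ^ j * 2 * (n + 1 + j) * ((n + j).choose (j + 1) * (j + 1)) := by ring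
    _ = 2 ^ j * 2 * n * ((n + j).choose j * (n + j + 1)) := by rw [h₁]; ring
    _ = 2 * (n + 1) * n * ((n + j + 1).choose j * 2 ^ j) := by rw [h₂]; ring

lemma le_of_le_of_mul_eq_of_mul_eq {a b a' b' p q p' q' : ℕ} (hab : a ≤ b)
    (ha : a' * p = q * a) (hb : b * p' = q' * b') (hq : q * q' ≤ p * p') (hp : 0 < p * p') :
    a' ≤ b' := by
  refine Nat.le_of_mul_le_mul_right ?_ hp
  calc a' * (p * p') = q * a * p' := by rw [← ha]; ring
    _ ≤ q * b * p' := by gcongr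
    _ = q * q' * b' := by rw [mul_assoc, hb]; ring
    _ ≤ p * p' * b' := by gcongr
    _ = b' * (p * p') := mul_comm _ _

-- With `2y = x + 2r + d`, this is `U(m, x-1-r) / U(m, x+r) ≤ U(m, x-2-r) / U(m, x+r+1)`.
lemma ratio_step_bound {x r d : ℕ} (h : d + 2 * r + 2 ≤ x) :
    4 * (d * (d - 1)) * ((d + 4 * r + 4) * (d + 4 * r + 3)) ≤
      (d + x + r) * (x + r + 1) * ((d + x + 3 * r + 2) * (x - 1 - r)) := by
  have h₁ : d * (d + 4 * r + 4) ≤ (x + r + 1) * (x - 1 - r) := by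
    obtain ⟨u, rfl⟩ : ∃ u, x = d + 2 * r + 2 + u := ⟨x - (d + 2 * r + 2), by omega⟩
    rw [show d + 2 * r + 2 + u - 1 - r = d + r + 1 + u by omega]
    nlinarith
  have h₂ : 2 * (d - 1) * (2 * (d + 4 * r + 3)) ≤ (d + x + r) * (d + x + 3 * r + 2) := by
    rcases d with _ | d
    · simp
    rw [Nat.add_sub_cancel]
    nlinarith
  calc 4 * (d * (d - 1)) * ((d + 4 * r + 4) * (d + 4 * r + 3))
      = d * (d + 4 * r + 4) * (2 * (d - 1) * (2 * (d + 4 * r + 3))) := by ring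
    _ ≤ (x + r + 1) * (x - 1 - r) * ((d + x + r) * (d + x + 3 * r + 2)) :=
      Nat.mul_le_mul h₁ h₂
    _ = _ := by ring

lemma U_le_U_sub_one {x y : ℕ} (hx : y + 2 ≤ x) :
    U (x + 2 * y) x ≤ U (x + 2 * y) (x - 1) := by
  by_cases! hvanish : x + 2 * y < 2 * x
  · simp [U_eq_zero_of_lt hvanish]
  obtain ⟨n, hn⟩ : ∃ n, x + 2 * y = n + 2 * (x - 1) := ⟨2 * y + 2 - x, by omega⟩
  have hratio := U_succ_mul n (x - 1)
  rw [← hn, Nat.sub_add_cancel (by omega : 1 ≤ x)] at hratio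
  have hq : 2 * n * (n - 1) ≤ (n + (x - 1)) * x := by
    obtain ⟨u, rfl⟩ : ∃ u, x = n + 2 + u := ⟨x - (n + 2), by omega⟩
    rw [show n + 2 + u - 1 = n + 1 + u by omega]
    calc 2 * n * (n - 1) ≤ 2 * n * n := by gcongr; exact Nat.sub_le n 1
      _ ≤ (n + (n + 1 + u)) * (n + 2 + u) := by nlinarith
  refine Nat.le_of_mul_le_mul_right (c := (n + (x - 1)) * x) ?_ (Nat.mul_pos (by omega) (by omega))
  rw [hratio, mul_comm (U _ _)]
  gcongr

theorem U_add_le_U_sub_sub {x y : ℕ} (hx : y + 2 ≤ x) (r : ℕ) :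
    U (x + 2 * y) (x + r) ≤ U (x + 2 * y) (x - 1 - r) := by
  induction r with
  | zero => simpa using U_le_U_sub_one hx
  | succ r ih =>
    by_cases! hvanish : x + 2 * y < 2 * (x + (r + 1))
    · simp [U_eq_zero_of_lt hvanish]
    obtain ⟨d, hd⟩ : ∃ d, x + 2 * y = d + 2 * (x + r) := ⟨2 * y - x - 2 * r, by omega⟩
    have hd' : x + 2 * y = d + 4 * r + 4 + 2 * (x - 1 - (r + 1)) := by omega
    have ha := U_succ_mul d (x + r)
    have hb := U_succ_mul (d + 4 * r + 4) (x - 1 - (r + 1))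
    rw [← hd] at ha
    rw [← hd', show x - 1 - (r + 1) + 1 = x - 1 - r by omega] at hb
    rw [← add_assoc]
    refine le_of_le_of_mul_eq_of_mul_eq ih ha hb ?_ ?_
    · rw [show d + 4 * r + 4 - 1 = d + 4 * r + 3 by omega,
        show d + 4 * r + 4 + (x - 1 - (r + 1)) = d + x + 3 * r + 2 by omega]
      linarith [ratio_step_bound (by omega : d + 2 * r + 2 ≤ x)]
    · exact Nat.mul_pos (Nat.mul_pos (by omega) (by omega)) (Nat.mul_pos (by omega) (by omega))

lemma sum_Icc_U_le_sum_range {m x n k : ℕ} (hm : m < 2 * (x + k + 1)) :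
    ∑ j ∈ Icc (x + 1) n, U m j ≤ ∑ i ∈ range (k + 1), U m (x + i) := by
  rw [← Nat.add_sub_cancel_left (n := x) (m := k + 1), ← sum_Ico_eq_sum_range]
  refine sum_le_sum_of_ne_zero fun j hj hU => ?_
  have : 2 * j ≤ m := by
    by_contra! h
    exact hU (U_eq_zero_of_lt h)
  simp only [mem_Icc, mem_Ico] at hj ⊢
  omega

theorem stmt16 (x y : ℕ) (hx : y + 2 ≤ x) :
    (∀ r, r ≤ y / 2 → U (x + 2 * y) (x + r) ≤ U (x + 2 * y) (x - 1 - r)) ∧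
    (∑ j ∈ Finset.Icc (x + 1) (x + 2 * y), U (x + 2 * y) j)
      ≤ ∑ j ∈ Finset.range x, U (x + 2 * y) j := by
  refine ⟨fun r _ => U_add_le_U_sub_sub hx r, ?_⟩
  calc ∑ j ∈ Icc (x + 1) (x + 2 * y), U (x + 2 * y) j
      ≤ ∑ r ∈ range (y + 1), U (x + 2 * y) (x + r) := sum_Icc_U_le_sum_range (by omega)
    _ ≤ ∑ r ∈ range (y + 1), U (x + 2 * y) (x - 1 - r) :=
      sum_le_sum fun r _ => U_add_le_U_sub_sub hx r
    _ ≤ ∑ r ∈ range x, U (x + 2 * y) (x - 1 - r) :=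
      sum_le_sum_of_subset (range_subset_range.2 (by omega))
    _ = ∑ j ∈ range x, U (x + 2 * y) j := sum_range_reflect _ _
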